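/- In the setting of the main theorem (c > 2, n_{k+1}/n_k ≥ c, u_{n_k}, c_{n_k} ≠ 0, heights of coefficients o(n)), the partial sums s_N = ∑_{k=1}^N c_{n_k}/u_{n_k} satisfy H(s_N) ≤ |α|^{n_1 + ... + n_N + o(n_N)} as N → ∞. -/

import Mathlib

/-!
Each `u_m` is rational. If `D_x` is the common denominator of the minimal polynomial of `x`, then
`D_a D_b u_m` is an algebraic integer, hence an integer, so
`H(u_m) ≤ D_a D_b max(1, |u_m|) ≤ 2 (D_a max(1, |a_m|)) (D_b max(1, |b_m|)) |α|^m`, and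
`D_x max(1, |x|) ≤ D_x ∏_z max(1, |z|) = H(x)^{deg x}`, the product running over the conjugates
of `x`. As the degrees are bounded by `[ℚ(α) : ℚ]`, this gives `h(c_m / u_m) ≤ m log|α| + o(m)`.
The height of a sum of `N` rationals is at most `N` times the product of their heights, and since
`n_k` grows geometrically, `∑_{k ≤ N} o(n_k) = o(n_N)`.
-/

open IntermediateField Filter Finset

/-- The absolute logarithmic Weil height of an algebraic real number, computed from its
minimal polynomial over `ℚ`: if `p` is the monic minimal polynomial of degree `d`, with
`D` the least common multiple of the denominators of its coefficients, then
`h(x) = (1/d)·(log D + ∑_{roots z of p in ℂ} log⁺|z|)`. -/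
noncomputable def logHeight (x : ℝ) : ℝ :=
  (1 / ((minpoly ℚ x).natDegree : ℝ)) *
    (Real.log (((minpoly ℚ x).support.lcm fun i => ((minpoly ℚ x).coeff i).den : ℕ) : ℝ) +
      (((minpoly ℚ x).aroots ℂ).map fun z => Real.log (max 1 ‖z‖)).sum)

section Algebraic

open Polynomial

lemma Rat.natCast_max_natAbs_num_den_eq (q : ℚ) :
    ((max q.num.natAbs q.den : ℕ) : ℝ) = q.den * max 1 |(q : ℝ)| := by
  rw [mul_max_of_nonneg _ _ (by positivity), mul_one, max_comm,
    ← abs_of_nonneg (Nat.cast_nonneg (α := ℝ) q.den), ← abs_mul, Rat.cast_def,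
    mul_div_cancel₀ _ (by positivity), Nat.abs_cast, Nat.cast_max, Nat.cast_natAbs,
    Int.cast_abs]

lemma Rat.den_dvd_of_natCast_mul_eq_intCast {q : ℚ} {D : ℕ} (hD : D ≠ 0) {z : ℤ}
    (hz : (D : ℚ) * q = z) : (q.den : ℤ) ∣ D := by
  have hq : q = Rat.divInt z D := by
    rw [Rat.divInt_eq_div, ← hz]
    push_cast
    field_simp
  rw [hq]
  exact Rat.den_dvd z D

lemma Rat.mulHeight₁_le_natCast_mul_max_one_abs {q : ℚ} {D : ℕ} (hD : D ≠ 0)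
    (hq : IsIntegral ℤ ((D : ℝ) * q)) : Height.mulHeight₁ q ≤ D * max 1 |(q : ℝ)| := by
  have hqℚ : IsIntegral ℤ ((D : ℚ) * q) := by
    rw [← isIntegral_algebraMap_iff (algebraMap ℚ ℝ).injective]
    simpa using hq
  obtain ⟨z, hz⟩ := IsIntegrallyClosed.isIntegral_iff.mp hqℚ
  have hden : q.den ≤ D := Int.ofNat_le.mp <|
    Int.le_of_dvd (by positivity) (Rat.den_dvd_of_natCast_mul_eq_intCast hD hz.symm)
  rw [Rat.mulHeight₁_eq_max, Rat.natCast_max_natAbs_num_den_eq]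
  gcongr

lemma lcm_den_coeff_X_sub_C (q : ℚ) :
    ((X - C q).support.lcm fun i => ((X - C q).coeff i).den) = q.den := by
  apply Nat.dvd_antisymm
  · refine Finset.lcm_dvd fun i _ => ?_
    rw [coeff_sub, coeff_X, coeff_C]
    split_ifs <;> simp_all
  · rcases eq_or_ne q 0 with rfl | hq
    · simp
    · have h0 : 0 ∈ (X - C q).support := by simpa using hq
      have h := Finset.dvd_lcm (f := fun i => ((X - C q).coeff i).den) h0
      rwa [coeff_sub, coeff_X_zero, coeff_C_zero, zero_sub, Rat.neg_den] at h

lemma logHeight_ratCast (q : ℚ) : logHeight (q : ℝ) = Height.logHeight₁ q := by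
  have hmin : minpoly ℚ (q : ℝ) = X - C q := by simpa using minpoly.eq_X_sub_C ℝ q
  have hroots : (X - C q).aroots ℂ = {((q : ℝ) : ℂ)} := by simp [aroots_def]
  rw [logHeight, hmin, natDegree_X_sub_C, lcm_den_coeff_X_sub_C, hroots, Rat.logHeight₁_eq_log_max,
    Rat.natCast_max_natAbs_num_den_eq, Real.log_mul (by positivity) (by positivity)]
  simp

lemma Rat.logHeight₁_sum_le_sum_add_one {ι : Type*} (s : Finset ι) (x : ι → ℚ) :
    Height.logHeight₁ (∑ i ∈ s, x i) ≤ ∑ i ∈ s, (Height.logHeight₁ (x i) + 1) := by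
  have h := Height.logHeight₁_sum_le s x
  rw [NumberField.totalWeight_eq_finrank, Module.finrank_self, Nat.cast_one, one_mul] at h
  rw [sum_add_distrib, sum_const, nsmul_one]
  linarith [Real.log_le_self (Nat.cast_nonneg (α := ℝ) #s)]

lemma isIntegral_natCast_mul_of_den_coeff_dvd {A : Type*} [CommRing A] [Algebra ℚ A] {x : A}
    {p : ℚ[X]} (hp : p.Monic) (hx : aeval x p = 0) {D : ℕ} (hD : ∀ i, (p.coeff i).den ∣ D) :
    IsIntegral ℤ ((D : A) * x) := by
  obtain ⟨Q, hQ⟩ : C (D : ℚ) * p ∈ lifts (algebraMap ℤ ℚ) := by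
    refine (lifts_iff_coeff_lifts _).2 fun i => ?_
    obtain ⟨k, hk⟩ := hD i
    refine ⟨(p.coeff i).num * k, ?_⟩
    rw [coeff_C_mul, hk]
    push_cast
    linear_combination -(k : ℚ) * Rat.mul_den_eq_num (p.coeff i)
  rw [coe_mapRingHom] at hQ
  have hQlc : Q.leadingCoeff = D := by
    apply Int.cast_injective (α := ℚ)
    rw [← eq_intCast (algebraMap ℤ ℚ), ← leadingCoeff_map_of_injective (RingHom.injective_int _),
      hQ, leadingCoeff_mul, leadingCoeff_C, hp.leadingCoeff, mul_one]
    simp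
  have hQx : aeval x Q = 0 := by
    rw [← aeval_map_algebraMap ℚ, hQ, map_mul, hx, mul_zero]
  simpa [hQlc] using isIntegral_leadingCoeff_smul Q x hQx

lemma IsIntegral.of_minpoly_eq {L : Type*} [Field L] [CharZero L] {α β : L}
    (hα : IsIntegral ℤ α) (h : minpoly ℚ β = minpoly ℚ α) : IsIntegral ℤ β := by
  refine ⟨minpoly ℤ α, minpoly.monic hα, ?_⟩
  rw [← aeval_def, ← aeval_map_algebraMap ℚ, ← minpoly.isIntegrallyClosed_eq_field_fractions' ℚ hα,
    ← h, minpoly.aeval]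

lemma IntermediateField.isIntegral_and_natDegree_minpoly_le_finrank {K L : Type*} [Field K]
    [Field L] [Algebra K L] {F : IntermediateField K L} [FiniteDimensional K F] {x : L}
    (hx : x ∈ F) : IsIntegral K x ∧ (minpoly K x).natDegree ≤ Module.finrank K F := by
  refine ⟨(IsIntegral.of_finite K (⟨x, hx⟩ : F)).algebraMap, ?_⟩
  rw [← IntermediateField.minpoly_eq ⟨x, hx⟩]
  exact minpoly.natDegree_le _

noncomputable def minpolyDen (x : ℝ) : ℕ :=
  (minpoly ℚ x).support.lcm fun i => ((minpoly ℚ x).coeff i).den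

lemma minpolyDen_ne_zero (x : ℝ) : minpolyDen x ≠ 0 := by
  simp [minpolyDen, Finset.lcm_eq_zero_iff]

lemma den_coeff_dvd_minpolyDen (x : ℝ) (i : ℕ) : ((minpoly ℚ x).coeff i).den ∣ minpolyDen x := by
  by_cases hi : i ∈ (minpoly ℚ x).support
  · exact Finset.dvd_lcm hi
  · simp [notMem_support_iff.mp hi]

lemma isIntegral_minpolyDen_mul {x : ℝ} (hx : IsIntegral ℚ x) : IsIntegral ℤ (minpolyDen x * x) :=
  isIntegral_natCast_mul_of_den_coeff_dvd (minpoly.monic hx) (minpoly.aeval ℚ x)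
    (den_coeff_dvd_minpolyDen x)

lemma logHeight_nonneg (x : ℝ) : 0 ≤ logHeight x := by
  refine mul_nonneg (by positivity) (add_nonneg (Real.log_natCast_nonneg _) ?_)
  exact Multiset.sum_nonneg fun y hy => by
    obtain ⟨z, -, rfl⟩ := Multiset.mem_map.1 hy
    exact Real.log_nonneg (le_max_left _ _)

lemma log_minpolyDen_add_log_max_one_abs_le {x : ℝ} (hx : IsIntegral ℚ x) :
    Real.log (minpolyDen x) + Real.log (max 1 |x|) ≤ (minpoly ℚ x).natDegree * logHeight x := by
  have hd : ((minpoly ℚ x).natDegree : ℝ) ≠ 0 := by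
    exact_mod_cast (minpoly.natDegree_pos hx).ne'
  have hmem : (x : ℂ) ∈ (minpoly ℚ x).aroots ℂ := by
    rw [mem_aroots]
    refine ⟨minpoly.ne_zero hx, ?_⟩
    rw [← Complex.coe_algebraMap, aeval_algebraMap_apply, minpoly.aeval, map_zero]
  rw [logHeight, ← mul_assoc, mul_one_div_cancel hd, one_mul, ← minpolyDen]
  gcongr
  have hsingle := Multiset.single_le_sum (fun y hy => ?_) _ (Multiset.mem_map_of_mem
    (fun z : ℂ => Real.log (max 1 ‖z‖)) hmem)
  · simpa using hsingle
  · obtain ⟨z, -, rfl⟩ := Multiset.mem_map.1 hy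
    exact Real.log_nonneg (le_max_left _ _)

lemma max_one_abs_mul_pow_sub_mul_pow_le {α β x y : ℝ} (hα : 1 ≤ |α|) (hβ : |β| ≤ 1) (m : ℕ) :
    max 1 |x * α ^ m - y * β ^ m| ≤ 2 * max 1 |x| * max 1 |y| * |α| ^ m := by
  have hx := le_max_left 1 |x|
  have hy := le_max_left 1 |y|
  have hαm : 1 ≤ |α| ^ m := one_le_pow₀ hα
  have hβm : |β| ^ m ≤ 1 := pow_le_one₀ (abs_nonneg β) hβ
  have hsum : max 1 |x| + max 1 |y| ≤ 2 * max 1 |x| * max 1 |y| := by nlinarith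
  refine max_le (by nlinarith) ?_
  calc |x * α ^ m - y * β ^ m| ≤ |x| * |α| ^ m + |y| * |β| ^ m := by
        simpa only [abs_mul, abs_pow] using abs_sub (x * α ^ m) (y * β ^ m)
    _ ≤ max 1 |x| * |α| ^ m + max 1 |y| * |α| ^ m := by
        have hy' : |y| * |β| ^ m ≤ max 1 |y| :=
          (mul_le_of_le_one_right (abs_nonneg y) hβm).trans (le_max_right _ _)
        have hx' : |x| * |α| ^ m ≤ max 1 |x| * |α| ^ m := by gcongr; exact le_max_right _ _
        nlinarith
    _ ≤ 2 * max 1 |x| * max 1 |y| * |α| ^ m := by nlinarith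

lemma logHeight₁_le_of_mul_pow_sub_mul_pow_eq {α β x y : ℝ} (hα : IsIntegral ℤ α)
    (hβ : IsIntegral ℤ β) (hα1 : 1 ≤ |α|) (hβ1 : |β| ≤ 1) (hx : IsIntegral ℚ x)
    (hy : IsIntegral ℚ y) {m : ℕ} {q : ℚ} (hq : x * α ^ m - y * β ^ m = q) :
    Height.logHeight₁ q ≤ (minpoly ℚ x).natDegree * logHeight x +
      (minpoly ℚ y).natDegree * logHeight y + Real.log 2 + m * Real.log |α| := by
  set Dx := minpolyDen x
  set Dy := minpolyDen y
  have hDx := minpolyDen_ne_zero x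
  have hDy := minpolyDen_ne_zero y
  have hint : IsIntegral ℤ (((Dx * Dy : ℕ) : ℝ) * q) := by
    have h : ((Dx * Dy : ℕ) : ℝ) * q =
        (Dx * x) * Dy * α ^ m - Dx * (Dy * y) * β ^ m := by
      rw [← hq]; push_cast; ring
    rw [h]
    exact (((isIntegral_minpolyDen_mul hx).mul (isIntegral_natCast Dy)).mul (hα.pow m)).sub
      (((isIntegral_natCast Dx).mul (isIntegral_minpolyDen_mul hy)).mul (hβ.pow m))
  have hH := (Rat.mulHeight₁_le_natCast_mul_max_one_abs (mul_ne_zero hDx hDy) hint).trans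
    (mul_le_mul_of_nonneg_left (hq ▸ max_one_abs_mul_pow_sub_mul_pow_le hα1 hβ1 m) (by positivity))
  have hlog := Real.log_le_log (Height.mulHeight₁_pos q) hH
  have hαpos : 0 < |α| := by linarith
  rw [← Height.logHeight₁_eq_log_mulHeight₁] at hlog
  rw [Real.log_mul (by positivity) (by positivity), Real.log_mul (by positivity) (by positivity),
    Real.log_mul (by positivity) (by positivity), Real.log_mul (by positivity) (by positivity),
    Nat.cast_mul, Real.log_mul (by positivity) (by positivity), Real.log_pow] at hlog
  linarith [log_minpolyDen_add_log_max_one_abs_le hx, log_minpolyDen_add_log_max_one_abs_le hy]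

lemma logHeight₁_le_of_mem_of_mul_pow_sub_mul_pow_eq {F : IntermediateField ℚ ℝ}
    [FiniteDimensional ℚ F] {α β x y : ℝ} (hα : IsIntegral ℤ α) (hβ : IsIntegral ℤ β)
    (hα1 : 1 ≤ |α|) (hβ1 : |β| ≤ 1) (hx : x ∈ F) (hy : y ∈ F) {m : ℕ} {q : ℚ}
    (hq : x * α ^ m - y * β ^ m = q) :
    Height.logHeight₁ q ≤ Module.finrank ℚ F * (logHeight x + logHeight y) + Real.log 2 +
      m * Real.log |α| := by
  obtain ⟨hx', hdx⟩ := isIntegral_and_natDegree_minpoly_le_finrank hx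
  obtain ⟨hy', hdy⟩ := isIntegral_and_natDegree_minpoly_le_finrank hy
  have hxF : ((minpoly ℚ x).natDegree : ℝ) * logHeight x ≤ Module.finrank ℚ F * logHeight x := by
    gcongr; exact logHeight_nonneg x
  have hyF : ((minpoly ℚ y).natDegree : ℝ) * logHeight y ≤ Module.finrank ℚ F * logHeight y := by
    gcongr; exact logHeight_nonneg y
  linarith [logHeight₁_le_of_mul_pow_sub_mul_pow_eq hα hβ hα1 hβ1 hx' hy' hq]

end Algebraic

open Asymptotics in
lemma isLittleO_natCast_of_tendsto_div {f : ℕ → ℝ} (h : Tendsto (fun m => f m / m) atTop (nhds 0)) :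
    f =o[atTop] (fun m : ℕ => (m : ℝ)) := by
  refine (isLittleO_iff_tendsto' ?_).2 h
  filter_upwards [eventually_ne_atTop 0] with m hm h0
  exact absurd h0 (Nat.cast_ne_zero.2 hm)

section Lacunary

open Asymptotics

variable {c : ℝ} {n : ℕ → ℕ}

lemma sum_Icc_le_of_lacunary (hc : 1 < c) (hratio : ∀ k, 1 ≤ k → c * (n k : ℝ) ≤ n (k + 1))
    (N : ℕ) : ∑ k ∈ Icc 1 N, (n k : ℝ) ≤ c / (c - 1) * n N := by
  rw [div_mul_eq_mul_div, le_div_iff₀ (by linarith), mul_comm]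
  induction N with
  | zero => simp only [Order.lt_one_iff, Icc_eq_empty_of_lt, sum_empty, mul_zero]; positivity
  | succ N ih =>
    rw [sum_Icc_succ_top (by omega), mul_add]
    rcases Nat.eq_zero_or_pos N with rfl | hN
    · simp only [Order.lt_one_iff, Icc_eq_empty_of_lt, sum_empty, mul_zero, zero_add]
      nlinarith [(n 1).cast_nonneg (α := ℝ)]
    · linarith [hratio N hN]

lemma self_le_of_lacunary (hc : 1 < c) (hpos : 0 < n 1)
    (hratio : ∀ k, 1 ≤ k → c * (n k : ℝ) ≤ n (k + 1)) : ∀ k, 1 ≤ k → k ≤ n k := by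
  intro k hk
  induction k, hk using Nat.le_induction with
  | base => exact hpos
  | succ k hk ih =>
    have hlt : (n k : ℝ) < n (k + 1) := by
      have : (0 : ℝ) < n k := by exact_mod_cast (by omega : 0 < n k)
      nlinarith [hratio k hk]
    have : n k < n (k + 1) := by exact_mod_cast hlt
    omega

lemma tendsto_atTop_of_lacunary (hc : 1 < c) (hpos : 0 < n 1)
    (hratio : ∀ k, 1 ≤ k → c * (n k : ℝ) ≤ n (k + 1)) : Tendsto n atTop atTop :=
  tendsto_atTop_mono' _ (eventually_atTop.2 ⟨1, self_le_of_lacunary hc hpos hratio⟩) tendsto_id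

theorem isLittleO_sum_Icc_comp_of_lacunary {G : ℕ → ℝ} (hG : G =o[atTop] (fun m : ℕ => (m : ℝ)))
    (hc : 1 < c) (hpos : 0 < n 1) (hratio : ∀ k, 1 ≤ k → c * (n k : ℝ) ≤ n (k + 1)) :
    (fun N => ∑ k ∈ Icc 1 N, G (n k)) =o[atTop] (fun N => (n N : ℝ)) := by
  have hn := tendsto_atTop_of_lacunary hc hpos hratio
  refine IsLittleO.of_bound fun ε hε => ?_
  set C := c / (c - 1)
  have hC : 0 < C := div_pos (by linarith) (by linarith)
  obtain ⟨M, hM⟩ := eventually_atTop.1 (hG.bound (show 0 < ε / (2 * C) by positivity))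
  obtain ⟨K, hK⟩ := eventually_atTop.1 (hn.eventually_ge_atTop M)
  set A := ∑ k ∈ range K, ‖G (n k)‖
  filter_upwards [(tendsto_natCast_atTop_atTop.comp hn).eventually_ge_atTop (2 * A / ε)] with N hN
  have head : ∑ k ∈ Icc 1 N with k < K, ‖G (n k)‖ ≤ A :=
    sum_le_sum_of_subset_of_nonneg (fun k hk => by simp at hk ⊢; omega)
      (fun _ _ _ => norm_nonneg _)
  have tail : ∑ k ∈ Icc 1 N with ¬k < K, ‖G (n k)‖ ≤ ε / 2 * n N :=
    calc ∑ k ∈ Icc 1 N with ¬k < K, ‖G (n k)‖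
        ≤ ∑ k ∈ Icc 1 N with ¬k < K, ε / (2 * C) * (n k : ℝ) := sum_le_sum fun k hk => by
          simpa using hM (n k) (hK k (by simp at hk; omega))
      _ ≤ ε / (2 * C) * ∑ k ∈ Icc 1 N, (n k : ℝ) := by
          rw [← mul_sum]
          gcongr ?_ * ?_
          exact sum_le_sum_of_subset_of_nonneg (filter_subset _ _) fun _ _ _ => by positivity
      _ ≤ ε / (2 * C) * (C * n N) := by gcongr; exact sum_Icc_le_of_lacunary hc hratio N
      _ = ε / 2 * n N := by field_simp
  have hA : A ≤ ε / 2 * n N := by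
    rw [div_le_iff₀ hε] at hN
    simp only [Function.comp_apply] at hN
    linarith
  calc ‖∑ k ∈ Icc 1 N, G (n k)‖ ≤ ∑ k ∈ Icc 1 N, ‖G (n k)‖ := norm_sum_le _ _
    _ = ∑ k ∈ Icc 1 N with k < K, ‖G (n k)‖ + ∑ k ∈ Icc 1 N with ¬k < K, ‖G (n k)‖ :=
        (sum_filter_add_sum_filter_not _ _ _).symm
    _ ≤ ε * ‖(n N : ℝ)‖ := by rw [Real.norm_natCast]; linarith

end Lacunary

theorem partial_sum_height_bound_general (α β : ℝ)
    (hint : IsIntegral ℤ α)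
    (hconj : minpoly ℚ β = minpoly ℚ α)
    (hβ1 : |β| < 1) (hα1 : 1 < |α|)
    (a b : ℕ → ℝ) (cseq : ℕ → ℚ)
    (hamem : ∀ m, a m ∈ (ℚ⟮α⟯ : IntermediateField ℚ ℝ))
    (hbmem : ∀ m, b m ∈ (ℚ⟮α⟯ : IntermediateField ℚ ℝ))
    (hu : ∀ m : ℕ, ∃ q : ℚ, a m * α ^ m - b m * β ^ m = (q : ℝ))
    (hha : Tendsto (fun m : ℕ => logHeight (a m) / (m : ℝ)) atTop (nhds 0))
    (hhb : Tendsto (fun m : ℕ => logHeight (b m) / (m : ℝ)) atTop (nhds 0))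
    (hhc : Tendsto (fun m : ℕ => logHeight ((cseq m : ℝ)) / (m : ℝ)) atTop (nhds 0))
    (c : ℝ) (hc : 2 < c) (n : ℕ → ℕ)
    (hpos : 0 < n 1)
    (hratio : ∀ k, 1 ≤ k → c * (n k : ℝ) ≤ (n (k + 1) : ℝ)) :
    ∀ ε > (0 : ℝ), ∀ᶠ N in atTop,
      logHeight (∑ k ∈ Finset.Icc 1 N,
          (cseq (n k) : ℝ) / (a (n k) * α ^ (n k) - b (n k) * β ^ (n k))) ≤
        ((∑ k ∈ Finset.Icc 1 N, (n k : ℝ)) + ε * (n N : ℝ)) * Real.log |α| := by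
  choose u hu using hu
  have : FiniteDimensional ℚ ℚ⟮α⟯ := adjoin.finiteDimensional hint.tower_top
  set L := Real.log |α|
  -- the `1` pays for the `log N` in the height of a sum of `N` rationals
  set G : ℕ → ℝ := fun m => logHeight (cseq m) +
    Module.finrank ℚ ℚ⟮α⟯ * (logHeight (a m) + logHeight (b m)) + (Real.log 2 + 1)
  have hG : G =o[atTop] (fun m : ℕ => (m : ℝ)) :=
    ((isLittleO_natCast_of_tendsto_div hhc).add (((isLittleO_natCast_of_tendsto_div hha).add
      (isLittleO_natCast_of_tendsto_div hhb)).const_mul_left _)).add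
      ((Asymptotics.isLittleO_const_id_atTop _).comp_tendsto tendsto_natCast_atTop_atTop)
  have hterm (m : ℕ) : Height.logHeight₁ (cseq m / u m) + 1 ≤ G m + m * L := by
    have hdiv := Height.logHeight₁_mul_le (cseq m) (u m)⁻¹
    rw [Height.logHeight₁_inv, ← div_eq_mul_inv, ← logHeight_ratCast (cseq m)] at hdiv
    linarith [logHeight₁_le_of_mem_of_mul_pow_sub_mul_pow_eq hint (hint.of_minpoly_eq hconj)
      hα1.le hβ1.le (hamem m) (hbmem m) (hu m)]
  intro ε hε
  filter_upwards [(isLittleO_sum_Icc_comp_of_lacunary hG (by linarith) hpos hratio).bound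
    (mul_pos hε (Real.log_pos hα1))] with N hN
  have hsum : ∑ k ∈ Icc 1 N, (cseq (n k) : ℝ) / (a (n k) * α ^ (n k) - b (n k) * β ^ (n k)) =
      ((∑ k ∈ Icc 1 N, cseq (n k) / u (n k) : ℚ) : ℝ) := by
    push_cast [hu]; rfl
  have hGN := (le_abs_self _).trans hN
  rw [Real.norm_natCast] at hGN
  rw [hsum, logHeight_ratCast]
  calc Height.logHeight₁ (∑ k ∈ Icc 1 N, cseq (n k) / u (n k))
      ≤ ∑ k ∈ Icc 1 N, (Height.logHeight₁ (cseq (n k) / u (n k)) + 1) :=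
        Rat.logHeight₁_sum_le_sum_add_one _ _
    _ ≤ ∑ k ∈ Icc 1 N, (G (n k) + n k * L) := sum_le_sum fun k _ => hterm (n k)
    _ ≤ _ := by rw [sum_add_distrib, ← sum_mul]; linarith

/-- In the setting of the main theorem (`α` a real quadratic unit with conjugate `β`,
`|β| < 1 < |α|`, `u_n = a_n α^n - b_n β^n ∈ ℚ`, heights of `a_n, b_n, c_n` of size `o(n)`,
`n_{k+1}/n_k ≥ c > 2`, `u_{n_k} ≠ 0 ≠ c_{n_k}`), the partial sums
`s_N = ∑_{k=1}^N c_{n_k}/u_{n_k}` satisfy `H(s_N) ≤ |α|^{n_1+...+n_N+o(n_N)}`: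
for every `ε > 0`, eventually `h(s_N) ≤ (n_1+...+n_N+ε·n_N)·log|α|`. -/
theorem partial_sum_height_bound (α β : ℝ)
    (hint : IsIntegral ℤ α) (hdeg : (minpoly ℚ α).natDegree = 2)
    (hconj : minpoly ℚ β = minpoly ℚ α) (hne : β ≠ α)
    (hunit : α * β = 1 ∨ α * β = -1) (hβ1 : |β| < 1) (hα1 : 1 < |α|)
    (a b : ℕ → ℝ) (cseq : ℕ → ℚ)
    (hamem : ∀ m, a m ∈ (ℚ⟮α⟯ : IntermediateField ℚ ℝ))
    (hbmem : ∀ m, b m ∈ (ℚ⟮α⟯ : IntermediateField ℚ ℝ))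
    (hu : ∀ m : ℕ, ∃ q : ℚ, a m * α ^ m - b m * β ^ m = (q : ℝ))
    (hha : Tendsto (fun m : ℕ => logHeight (a m) / (m : ℝ)) atTop (nhds 0))
    (hhb : Tendsto (fun m : ℕ => logHeight (b m) / (m : ℝ)) atTop (nhds 0))
    (hhc : Tendsto (fun m : ℕ => logHeight ((cseq m : ℝ)) / (m : ℝ)) atTop (nhds 0))
    (c : ℝ) (hc : 2 < c) (n : ℕ → ℕ)
    (hpos : 0 < n 1)
    (hmono : ∀ k, 1 ≤ k → n k < n (k + 1))
    (hratio : ∀ k, 1 ≤ k → c * (n k : ℝ) ≤ (n (k + 1) : ℝ))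
    (hune : ∀ k, 1 ≤ k → a (n k) * α ^ (n k) - b (n k) * β ^ (n k) ≠ 0)
    (hcne : ∀ k, 1 ≤ k → cseq (n k) ≠ 0) :
    ∀ ε > (0 : ℝ), ∀ᶠ N in atTop,
      logHeight (∑ k ∈ Finset.Icc 1 N,
          (cseq (n k) : ℝ) / (a (n k) * α ^ (n k) - b (n k) * β ^ (n k))) ≤
        ((∑ k ∈ Finset.Icc 1 N, (n k : ℝ)) + ε * (n N : ℝ)) * Real.log |α| :=
  partial_sum_height_bound_general α β hint hconj hβ1 hα1 a b cseq hamem hbmem hu hha hhb hhc c hc n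
    hpos hratio
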